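/- Suppose ρ is normalized Lipschitz, W : I² → ℝ is measurable with |W| ≤ 1 a.e., and the filter coefficients (h_{fgk}^{(ℓ)}) satisfy |h_{fgk}^{(ℓ)}| ≤ h̄ for all f,g ∈ {1,…,F}, k ∈ {0,…,K−1}, ℓ ∈ {1,…,L}. Then for any X, X̃ ∈ L^∞(I; ℝ^F), the L-layer graphon neural network satisfies ‖Φ(W; X; h) − Φ(W; X̃; h)‖_{L^∞(I;ℝ^F)} ≤ (F K h̄)^L ‖X − X̃‖_{L^∞(I;ℝ^F)}. -/

import Mathlib

/-!
Since `I` has measure one and `|W| ≤ 1`, the operator `T_W` preserves a.e. bounds; by linearity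
`|T_W^k X_g − T_W^k X̃_g| ≤ d_g := ‖X_g − X̃_g‖_∞` for every `k`. As `ρ` is 1-Lipschitz, the `f`-th
component of the difference of one layer is bounded by `K h̄ ∑_g d_g ≤ K h̄ √F ‖X − X̃‖`
(Cauchy–Schwarz), and taking the Euclidean norm over `f` costs another `√F`. So each layer is
`F K h̄`-Lipschitz for the mixed `L^∞` norm, and the network composes `L` layers.
-/

open MeasureTheory Filter Set
open scoped ENNReal NNReal

noncomputable section

/-- Lebesgue measure restricted to the unit interval `I = [0,1]`. -/
def μI : Measure ℝ := volume.restrict (Set.Icc (0:ℝ) 1)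

/-- Lebesgue measure restricted to the unit square `I² = [0,1]²`. -/
def μI2 : Measure (ℝ × ℝ) := volume.restrict ((Set.Icc (0:ℝ) 1) ×ˢ (Set.Icc (0:ℝ) 1))

/-- The graphon integral operator `(T_W x)(v) = ∫_I W(u,v) x(u) du`. -/
def graphonOp (W : ℝ → ℝ → ℝ) (x : ℝ → ℝ) : ℝ → ℝ :=
  fun v => ∫ u in Set.Icc (0:ℝ) 1, W u v * x u

/-- `k`-fold composition `T_W^k` (identity for `k = 0`). -/
def graphonIter (W : ℝ → ℝ → ℝ) (k : ℕ) (x : ℝ → ℝ) : ℝ → ℝ :=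
  (graphonOp W)^[k] x

/-- `ρ` is normalized Lipschitz: `|ρ x − ρ y| ≤ |x − y|` and `ρ 0 = 0`. -/
def NormalizedLipschitz (ρ : ℝ → ℝ) : Prop :=
  (∀ x y : ℝ, |ρ x - ρ y| ≤ |x - y|) ∧ ρ 0 = 0

/-- One layer of a graphon neural network. -/
def gnnLayer (F K : ℕ) (W : ℝ → ℝ → ℝ) (ρ : ℝ → ℝ)
    (h : Fin F → Fin F → Fin K → ℝ) (X : Fin F → ℝ → ℝ) : Fin F → ℝ → ℝ :=
  fun f u => ρ (∑ g : Fin F, ∑ k : Fin K, h f g k * graphonIter W (k : ℕ) (X g) u)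

/-- The `L`-layer graphon neural network `Φ(W; X; h)`. -/
def gnn (F K L : ℕ) (W : ℝ → ℝ → ℝ) (ρ : ℝ → ℝ)
    (h : Fin L → Fin F → Fin F → Fin K → ℝ) (X : Fin F → ℝ → ℝ) : Fin F → ℝ → ℝ :=
  (List.ofFn h).foldl (fun Y hl => gnnLayer F K W ρ hl Y) X

/-- The mixed norm `‖X‖_{L^p(I;ℝ^F)} = (∑_f ‖X_f‖_{L^p(I)}²)^{1/2}`. -/
def vecLpNorm (F : ℕ) (p : ℝ≥0∞) (X : Fin F → ℝ → ℝ) : ℝ :=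
  Real.sqrt (∑ f : Fin F, ((eLpNorm (X f) p μI).toReal) ^ 2)

/-- `X : ℝ → L^∞(I;ℝ^F)` is, on `[0,T]`, a continuously differentiable solution of the
Graphon-NDE `dX/dt(t) = Φ(W; X(t); H(t))`, `X(0) = Z`, in the Banach space `L^∞(I;ℝ^F)`. -/
def IsGNDESolution (F K L : ℕ) (T : ℝ) (W : ℝ → ℝ → ℝ) (ρ : ℝ → ℝ)
    (H : ℝ → Fin L → Fin F → Fin F → Fin K → ℝ) (Z : Fin F → ℝ → ℝ)
    (X : ℝ → Fin F → Lp ℝ ⊤ μI) : Prop :=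
  (∀ f, (X 0 f : ℝ → ℝ) =ᵐ[μI] Z f) ∧
  ∃ X' : ℝ → Fin F → Lp ℝ ⊤ μI,
    ContinuousOn X' (Set.Icc 0 T) ∧
    ∀ t ∈ Set.Icc (0:ℝ) T,
      HasDerivWithinAt X (X' t) (Set.Icc 0 T) t ∧
      ∀ f, (X' t f : ℝ → ℝ) =ᵐ[μI]
        gnn F K L W ρ (H t) (fun g => (X t g : ℝ → ℝ)) f

/-- Operator norm (from `L²(I)` to `L²(I)`) of the difference `T_W − T_{W'}`. -/
def graphonOpNormSub (W W' : ℝ → ℝ → ℝ) : ℝ :=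
  ⨆ x : {x : ℝ → ℝ // MemLp x 2 μI ∧ eLpNorm x 2 μI ≤ 1},
    (eLpNorm (fun v => graphonOp W x v - graphonOp W' x v) 2 μI).toReal

/-- Left endpoint `u_i = (i−1)/n` of the cell `I_i` containing `u`. -/
def stepPt (n : ℕ) (u : ℝ) : ℝ := (⌊(n : ℝ) * u⌋ : ℝ) / n

/-- Sampled step kernel: `Wₙ(u,v) = W(u_i,u_j)` for `(u,v) ∈ I_i × I_j`. -/
def sampKernel (W : ℝ → ℝ → ℝ) (n : ℕ) : ℝ → ℝ → ℝ :=
  fun u v => W (stepPt n u) (stepPt n v)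

/-- Sampled step datum: `Zₙ(u) = Z(u_i)` for `u ∈ I_i`. -/
def sampDatum (F : ℕ) (Z : Fin F → ℝ → ℝ) (n : ℕ) : Fin F → ℝ → ℝ :=
  fun f u => Z f (stepPt n u)

/-- Support `W⁺ = {(u,v) ∈ I² : W(u,v) = 1}`. -/
def supportSet (W : ℝ → ℝ → ℝ) : Set (ℝ × ℝ) :=
  {p : ℝ × ℝ | p.1 ∈ Set.Icc (0:ℝ) 1 ∧ p.2 ∈ Set.Icc (0:ℝ) 1 ∧ W p.1 p.2 = 1}

/-- The cell `I_i = [u_i, u_i + 1/n)` containing `u`. -/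
def cell (n : ℕ) (u : ℝ) : Set ℝ := Set.Ico (stepPt n u) (stepPt n u + 1 / n)

open scoped Classical in
/-- Cell-intersection step kernel: `Wₙ = 1` on `I_i × I_j` iff `(I_i × I_j) ∩ W⁺ ≠ ∅`. -/
def interKernel (W : ℝ → ℝ → ℝ) (n : ℕ) : ℝ → ℝ → ℝ :=
  fun u v => if ((cell n u ×ˢ cell n v) ∩ supportSet W).Nonempty then 1 else 0

/-- Cell-average step datum: `Zₙ(u) = n ∫_{I_i} Z(v) dv` for `u ∈ I_i`. -/
def cellAvg (F : ℕ) (Z : Fin F → ℝ → ℝ) (n : ℕ) : Fin F → ℝ → ℝ :=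
  fun f u => (n : ℝ) * ∫ v in cell n u, Z f v

/-- Number of closed `δ`-mesh squares `[iδ,(i+1)δ] × [jδ,(j+1)δ]`, `i,j ∈ ℤ`, meeting `Ω`. -/
def meshCount (δ : ℝ) (Ω : Set (ℝ × ℝ)) : ℕ :=
  Set.ncard {p : ℤ × ℤ |
    ((Set.Icc ((p.1 : ℝ) * δ) (((p.1 : ℝ) + 1) * δ) ×ˢ
      Set.Icc ((p.2 : ℝ) * δ) (((p.2 : ℝ) + 1) * δ)) ∩ Ω).Nonempty}

/-- Upper box-counting dimension `limsup_{δ→0⁺} log N_δ(Ω) / (−log δ)`. -/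
def upperBoxDim (Ω : Set (ℝ × ℝ)) : ℝ :=
  Filter.limsup (fun δ : ℝ => Real.log (meshCount δ Ω) / (-Real.log δ))
    (nhdsWithin 0 (Set.Ioi 0))

end

section EssSup

variable {α : Type*} [MeasurableSpace α] {μ : Measure α} {x : α → ℝ}

lemma MeasureTheory.MemLp.ae_abs_le_toReal_eLpNorm_top (hx : MemLp x ⊤ μ) :
    ∀ᵐ u ∂μ, |x u| ≤ (eLpNorm x ⊤ μ).toReal := by
  simpa only [toReal_eLpNorm hx.1, Real.norm_eq_abs] using ae_le_lpNorm_exponent_top hx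

lemma toReal_eLpNorm_top_le_of_ae_abs_le {C : ℝ} (hC : 0 ≤ C) (hx : ∀ᵐ u ∂μ, |x u| ≤ C) :
    (eLpNorm x ⊤ μ).toReal ≤ C := by
  rw [eLpNorm_exponent_top]
  exact ENNReal.toReal_le_of_le_ofReal hC (eLpNormEssSup_le_of_ae_bound hx)

end EssSup

theorem List.foldl_le_pow_length_mul {α β : Type*} (φ : α → β → α) (P : α → Prop)
    (d : α → α → ℝ) {c : ℝ} (hc : 0 ≤ c) (l : List β)
    (hP : ∀ b ∈ l, ∀ x, P x → P (φ x b))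
    (hd : ∀ b ∈ l, ∀ x y, P x → P y → d (φ x b) (φ y b) ≤ c * d x y)
    {x y : α} (hx : P x) (hy : P y) :
    d (l.foldl φ x) (l.foldl φ y) ≤ c ^ l.length * d x y := by
  induction l generalizing x y with
  | nil => simp
  | cons b l ih =>
    have hPb := hP b mem_cons_self
    calc d ((b :: l).foldl φ x) ((b :: l).foldl φ y)
        ≤ c ^ l.length * d (φ x b) (φ y b) :=
          ih (fun b' hb' => hP b' (mem_cons_of_mem b hb'))
            (fun b' hb' => hd b' (mem_cons_of_mem b hb')) (hPb x hx) (hPb y hy)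
      _ ≤ c ^ l.length * (c * d x y) := by gcongr; exact hd b mem_cons_self x y hx hy
      _ = c ^ (b :: l).length * d x y := by rw [length_cons, pow_succ, mul_assoc]

instance : IsProbabilityMeasure μI := ⟨by simp [μI, Real.volume_Icc]⟩

lemma μI2_eq_prod : μI2 = μI.prod μI := by
  rw [μI2, μI, Measure.prod_restrict, ← Measure.volume_eq_prod]

lemma ae_ae_abs_le_one_of_ae_μI2 {W : ℝ → ℝ → ℝ} (hWm : Measurable (Function.uncurry W))
    (hWb : ∀ᵐ q ∂μI2, |Function.uncurry W q| ≤ 1) :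
    ∀ᵐ v ∂μI, ∀ᵐ u ∂μI, |W u v| ≤ 1 := by
  have hmeas : MeasurableSet {q : ℝ × ℝ | |W q.1 q.2| ≤ 1} :=
    measurableSet_le hWm.abs measurable_const
  rw [μI2_eq_prod] at hWb
  exact (Measure.ae_ae_comm hmeas).1 (Measure.ae_ae_of_ae_prod hWb)

section GraphonOp

variable {W : ℝ → ℝ → ℝ}

lemma aestronglyMeasurable_graphonOp (hWm : Measurable (Function.uncurry W)) {x : ℝ → ℝ}
    (hx : AEStronglyMeasurable x μI) : AEStronglyMeasurable (graphonOp W x) μI :=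
  ((hWm.comp measurable_swap).aestronglyMeasurable.mul hx.comp_snd).integral_prod_right'

lemma integrable_kernel_mul (hWm : Measurable (Function.uncurry W)) {x : ℝ → ℝ}
    (hx : MemLp x ⊤ μI) {v : ℝ} (hWv : ∀ᵐ u ∂μI, |W u v| ≤ 1) :
    Integrable (fun u => W u v * x u) μI :=
  (hx.integrable le_top).bdd_mul (hWm.comp measurable_prodMk_right).aestronglyMeasurable hWv

lemma graphonOp_sub_ae (hWm : Measurable (Function.uncurry W))
    (hW : ∀ᵐ v ∂μI, ∀ᵐ u ∂μI, |W u v| ≤ 1) {x y : ℝ → ℝ} (hx : MemLp x ⊤ μI)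
    (hy : MemLp y ⊤ μI) :
    ∀ᵐ v ∂μI, graphonOp W (fun u => x u - y u) v = graphonOp W x v - graphonOp W y v := by
  filter_upwards [hW] with v hWv
  simp only [graphonOp, mul_sub]
  exact integral_sub (integrable_kernel_mul hWm hx hWv) (integrable_kernel_mul hWm hy hWv)

lemma ae_abs_graphonOp_le (hW : ∀ᵐ v ∂μI, ∀ᵐ u ∂μI, |W u v| ≤ 1) {x : ℝ → ℝ} {C : ℝ}
    (hx : ∀ᵐ u ∂μI, |x u| ≤ C) : ∀ᵐ v ∂μI, |graphonOp W x v| ≤ C := by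
  filter_upwards [hW] with v hWv
  have hbound : ∀ᵐ u ∂μI, ‖W u v * x u‖ ≤ C := by
    filter_upwards [hWv, hx] with u hWuv hxu
    rw [norm_mul]
    simpa using mul_le_mul hWuv hxu (abs_nonneg _) zero_le_one
  change |∫ u, W u v * x u ∂μI| ≤ C
  simpa using norm_integral_le_of_norm_le_const hbound

lemma graphonIter_succ (k : ℕ) (x : ℝ → ℝ) :
    graphonIter W (k + 1) x = graphonOp W (graphonIter W k x) :=
  Function.iterate_succ_apply' _ _ _

lemma memLp_graphonIter (hWm : Measurable (Function.uncurry W))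
    (hW : ∀ᵐ v ∂μI, ∀ᵐ u ∂μI, |W u v| ≤ 1) {x : ℝ → ℝ} (hx : MemLp x ⊤ μI) (k : ℕ) :
    MemLp (graphonIter W k x) ⊤ μI := by
  induction k with
  | zero => exact hx
  | succ k ih =>
    rw [graphonIter_succ]
    exact memLp_top_of_bound (aestronglyMeasurable_graphonOp hWm ih.1) _
      (ae_abs_graphonOp_le hW ih.ae_abs_le_toReal_eLpNorm_top)

lemma ae_abs_graphonIter_sub_le (hWm : Measurable (Function.uncurry W))
    (hW : ∀ᵐ v ∂μI, ∀ᵐ u ∂μI, |W u v| ≤ 1) {x y : ℝ → ℝ} (hx : MemLp x ⊤ μI)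
    (hy : MemLp y ⊤ μI) {C : ℝ} (hxy : ∀ᵐ u ∂μI, |x u - y u| ≤ C) (k : ℕ) :
    ∀ᵐ v ∂μI, |graphonIter W k x v - graphonIter W k y v| ≤ C := by
  induction k with
  | zero => exact hxy
  | succ k ih =>
    simp only [graphonIter_succ]
    filter_upwards [graphonOp_sub_ae hWm hW (memLp_graphonIter hWm hW hx k)
      (memLp_graphonIter hWm hW hy k), ae_abs_graphonOp_le hW ih] with v hlin hbound
    rwa [← hlin]

end GraphonOp

lemma sum_toReal_eLpNorm_le_sqrt_mul_vecLpNorm {F : ℕ} (p : ℝ≥0∞) (X : Fin F → ℝ → ℝ) :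
    ∑ g, (eLpNorm (X g) p μI).toReal ≤ √F * vecLpNorm F p X := by
  rw [vecLpNorm, ← Real.sqrt_mul (Nat.cast_nonneg F)]
  refine Real.le_sqrt_of_sq_le ?_
  simpa using sq_sum_le_card_mul_sum_sq (s := Finset.univ)
    (f := fun g => (eLpNorm (X g) p μI).toReal)

lemma vecLpNorm_le_sqrt_mul_of_forall_le {F : ℕ} {p : ℝ≥0∞} {X : Fin F → ℝ → ℝ} {B : ℝ}
    (hB : 0 ≤ B) (hX : ∀ f, (eLpNorm (X f) p μI).toReal ≤ B) :
    vecLpNorm F p X ≤ √F * B :=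
  calc vecLpNorm F p X ≤ √(∑ _f : Fin F, B ^ 2) :=
        Real.sqrt_le_sqrt <| Finset.sum_le_sum fun f _ =>
          pow_le_pow_left₀ ENNReal.toReal_nonneg (hX f) 2
    _ = √F * B := by simp [Real.sqrt_mul, Real.sqrt_sq hB]

lemma NormalizedLipschitz.lipschitzWith {ρ : ℝ → ℝ} (hρ : NormalizedLipschitz ρ) :
    LipschitzWith 1 ρ :=
  LipschitzWith.of_dist_le_mul fun x y => by simpa [Real.dist_eq] using hρ.1 x y

section GnnLayer

variable {F K : ℕ} {W : ℝ → ℝ → ℝ} {ρ : ℝ → ℝ}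

lemma memLp_gnnLayer (hWm : Measurable (Function.uncurry W))
    (hW : ∀ᵐ v ∂μI, ∀ᵐ u ∂μI, |W u v| ≤ 1) (hρ : NormalizedLipschitz ρ)
    (hl : Fin F → Fin F → Fin K → ℝ) {X : Fin F → ℝ → ℝ} (hX : ∀ g, MemLp (X g) ⊤ μI)
    (f : Fin F) : MemLp (gnnLayer F K W ρ hl X f) ⊤ μI :=
  hρ.lipschitzWith.comp_memLp hρ.2 <| memLp_finsetSum _ fun g _ =>
    memLp_finsetSum _ fun k _ => (memLp_graphonIter hWm hW (hX g) k).const_mul _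

lemma ae_abs_gnnLayer_sub_le (hWm : Measurable (Function.uncurry W))
    (hW : ∀ᵐ v ∂μI, ∀ᵐ u ∂μI, |W u v| ≤ 1) (hρ : NormalizedLipschitz ρ) {hbar : ℝ}
    {hl : Fin F → Fin F → Fin K → ℝ} (hhl : ∀ f g k, |hl f g k| ≤ hbar)
    {X Xt : Fin F → ℝ → ℝ} (hX : ∀ g, MemLp (X g) ⊤ μI) (hXt : ∀ g, MemLp (Xt g) ⊤ μI)
    (f : Fin F) :
    ∀ᵐ u ∂μI, |gnnLayer F K W ρ hl X f u - gnnLayer F K W ρ hl Xt f u|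
      ≤ K * hbar * ∑ g, (eLpNorm (fun u => X g u - Xt g u) ⊤ μI).toReal := by
  set d : Fin F → ℝ := fun g => (eLpNorm (fun u => X g u - Xt g u) ⊤ μI).toReal
  have hiter : ∀ᵐ u ∂μI, ∀ g (k : Fin K),
      |graphonIter W k (X g) u - graphonIter W k (Xt g) u| ≤ d g := by
    simp only [ae_all_iff]
    exact fun g k => ae_abs_graphonIter_sub_le hWm hW (hX g) (hXt g)
      ((hX g).sub (hXt g)).ae_abs_le_toReal_eLpNorm_top k
  filter_upwards [hiter] with u hu
  calc |gnnLayer F K W ρ hl X f u - gnnLayer F K W ρ hl Xt f u|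
      ≤ |∑ g, ∑ k : Fin K, hl f g k * (graphonIter W k (X g) u - graphonIter W k (Xt g) u)| := by
        refine (hρ.1 _ _).trans_eq ?_
        simp only [← Finset.sum_sub_distrib, mul_sub]
    _ ≤ ∑ g, ∑ k : Fin K, |hl f g k| * |graphonIter W k (X g) u - graphonIter W k (Xt g) u| := by
        simp only [← abs_mul]
        exact (Finset.abs_sum_le_sum_abs _ _).trans
          (Finset.sum_le_sum fun g _ => Finset.abs_sum_le_sum_abs _ _)
    _ ≤ ∑ g, ∑ _k : Fin K, hbar * d g := by
        refine Finset.sum_le_sum fun g _ => Finset.sum_le_sum fun k _ => ?_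
        exact (mul_le_mul_of_nonneg_left (hu g k) (abs_nonneg _)).trans
          (mul_le_mul_of_nonneg_right (hhl f g k) ENNReal.toReal_nonneg)
    _ = K * hbar * ∑ g, d g := by simp [Finset.mul_sum, mul_assoc]

lemma vecLpNorm_gnnLayer_sub_le (hWm : Measurable (Function.uncurry W))
    (hW : ∀ᵐ v ∂μI, ∀ᵐ u ∂μI, |W u v| ≤ 1) (hρ : NormalizedLipschitz ρ) {hbar : ℝ}
    (hbar0 : 0 ≤ hbar) {hl : Fin F → Fin F → Fin K → ℝ} (hhl : ∀ f g k, |hl f g k| ≤ hbar)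
    {X Xt : Fin F → ℝ → ℝ} (hX : ∀ g, MemLp (X g) ⊤ μI) (hXt : ∀ g, MemLp (Xt g) ⊤ μI) :
    vecLpNorm F ⊤ (fun f u => gnnLayer F K W ρ hl X f u - gnnLayer F K W ρ hl Xt f u)
      ≤ F * K * hbar * vecLpNorm F ⊤ (fun f u => X f u - Xt f u) := by
  set D := vecLpNorm F ⊤ (fun f u => X f u - Xt f u)
  have hB : 0 ≤ K * hbar * (√F * D) := by
    have hD : 0 ≤ D := Real.sqrt_nonneg _
    positivity
  have hcomponent (f : Fin F) :
      (eLpNorm (fun u => gnnLayer F K W ρ hl X f u - gnnLayer F K W ρ hl Xt f u) ⊤ μI).toReal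
        ≤ K * hbar * (√F * D) := by
    refine toReal_eLpNorm_top_le_of_ae_abs_le hB ?_
    filter_upwards [ae_abs_gnnLayer_sub_le hWm hW hρ hhl hX hXt f] with u hu
    refine hu.trans ?_
    gcongr
    exact sum_toReal_eLpNorm_le_sqrt_mul_vecLpNorm ⊤ (fun g u => X g u - Xt g u)
  calc _ ≤ √F * (K * hbar * (√F * D)) := vecLpNorm_le_sqrt_mul_of_forall_le hB hcomponent
    _ = F * K * hbar * D := by
      linear_combination K * hbar * D * Real.mul_self_sqrt (Nat.cast_nonneg (α := ℝ) F)

end GnnLayer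

/-- **Lipschitz estimate for graphon neural networks in `L^∞`.**
For a normalized Lipschitz activation, `|W| ≤ 1` a.e., and filters bounded by `h̄`, the `L`-layer
graphon neural network satisfies
`‖Φ(W;X;h) − Φ(W;X̃;h)‖_{L^∞(I;ℝ^F)} ≤ (F K h̄)^L ‖X − X̃‖_{L^∞(I;ℝ^F)}`. -/
theorem gnn_lipschitz_Linfty
    (F K L : ℕ) (hF : 1 ≤ F) (hK : 1 ≤ K) (hL : 1 ≤ L)
    (ρ : ℝ → ℝ) (hρ : NormalizedLipschitz ρ)
    (W : ℝ → ℝ → ℝ) (hWm : Measurable (Function.uncurry W))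
    (hWb : ∀ᵐ q ∂μI2, |Function.uncurry W q| ≤ 1)
    (h : Fin L → Fin F → Fin F → Fin K → ℝ) (hbar : ℝ)
    (hh : ∀ ℓ f g k, |h ℓ f g k| ≤ hbar)
    (X Xt : Fin F → ℝ → ℝ)
    (hX : ∀ f, MemLp (X f) ⊤ μI) (hXt : ∀ f, MemLp (Xt f) ⊤ μI) :
    vecLpNorm F ⊤ (fun f u => gnn F K L W ρ h X f u - gnn F K L W ρ h Xt f u)
      ≤ ((F : ℝ) * K * hbar) ^ L * vecLpNorm F ⊤ (fun f u => X f u - Xt f u) := by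
  have hbar0 : 0 ≤ hbar := (abs_nonneg _).trans (hh ⟨0, hL⟩ ⟨0, hF⟩ ⟨0, hF⟩ ⟨0, hK⟩)
  have hW := ae_ae_abs_le_one_of_ae_μI2 hWm hWb
  have hlayers := List.foldl_le_pow_length_mul (fun Y hl => gnnLayer F K W ρ hl Y)
    (fun Y => ∀ g, MemLp (Y g) ⊤ μI) (fun Y Z => vecLpNorm F ⊤ fun f u => Y f u - Z f u)
    (c := F * K * hbar) (by positivity) (List.ofFn h)
    (fun hl _ Y hY => memLp_gnnLayer hWm hW hρ hl hY)
    (fun hl hmem Y Z hY hZ => by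
      obtain ⟨ℓ, rfl⟩ := List.mem_ofFn.mp hmem
      exact vecLpNorm_gnnLayer_sub_le hWm hW hρ hbar0 (hh ℓ) hY hZ)
    hX hXt
  simpa [gnn, List.length_ofFn] using hlayers
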